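/- arXiv:2005.00996 — 4 statements merged into one kernel-verified Lean document; each statement's English description precedes it below -/
import Mathlib

section
/- Let Y be exponentially distributed with rate 1, and let a, α₁, α₂, ρ, γ̃_F, γ̃_N > 0 with α₂ - α₁ γ̃_F > 0. Then P(¬( a α₂ Y/(a α₁ Y + 1/ρ) ≥ γ̃_F and a α₁ ρ Y ≥ γ̃_N )) = 1 - e^{-ρ̃_m}, where ρ̃_m = max{ γ̃_F / ((α₂ - α₁ γ̃_F) a ρ), γ̃_N / (a α₁ ρ) }. -/
open MeasureTheory Real

/-- The law of an Exp(1) random variable: density e^(-y) on [0, ∞). -/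
noncomputable def expMeasure1 : MeasureTheory.Measure ℝ :=
  MeasureTheory.volume.withDensity fun y => ENNReal.ofReal (if 0 ≤ y then Real.exp (-y) else 0)

/-!
Since `α₂ - α₁ γ̃_F > 0`, the SINR condition `γ̃_F ≤ a α₂ Y / (a α₁ Y + 1/ρ)` is, for `Y ≥ 0`,
the linear threshold `Y ≥ γ̃_F / ((α₂ - α₁ γ̃_F) a ρ)`, and the SNR condition is the threshold
`Y ≥ γ̃_N / (a α₁ ρ)`. Decoding thus succeeds exactly when `Y` exceeds the larger threshold `ρ̃_m`,
and the outage probability is the Exp(1) CDF at `ρ̃_m`.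
-/

open ProbabilityTheory

lemma expMeasure1_eq_expMeasure_one : expMeasure1 = expMeasure 1 := by
  rw [expMeasure1, expMeasure, gammaMeasure]
  congr 1
  funext y
  change _ = exponentialPDF 1 y
  simp [exponentialPDF_eq]

lemma measureReal_expMeasure_Iio {r : ℝ} (hr : 0 < r) {x : ℝ} (hx : 0 ≤ x) :
    (expMeasure r).real (Set.Iio x) = 1 - exp (-(r * x)) := by
  have := isProbabilityMeasure_expMeasure hr
  have : NullSingletonClass (expMeasure r) :=
    inferInstanceAs (NullSingletonClass (volume.withDensity _))
  rw [measureReal_congr Iio_ae_eq_Iic, ← cdf_eq_real, cdf_expMeasure_eq hr, if_pos hx]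

lemma le_sinr_iff {a α1 α2 ρ γ y : ℝ} (ha : 0 < a) (hρ : 0 < ρ) (hcond : 0 < α2 - α1 * γ)
    (hden : 0 < a * α1 * y + 1 / ρ) :
    γ ≤ a * α2 * y / (a * α1 * y + 1 / ρ) ↔ γ / ((α2 - α1 * γ) * a * ρ) ≤ y := by
  have key : γ * (a * α1 * y + 1 / ρ) - a * α2 * y = (γ - (α2 - α1 * γ) * a * ρ * y) / ρ := by
    field_simp
    ring
  rw [le_div_iff₀ hden, div_le_iff₀' (by positivity), ← sub_nonpos, key, div_le_iff₀ hρ, zero_mul,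
    sub_nonpos]

lemma decoding_success_iff {a α1 α2 ρ γF γN : ℝ} (ha : 0 < a) (hα1 : 0 < α1) (hρ : 0 < ρ)
    (hγN : 0 < γN) (hcond : 0 < α2 - α1 * γF) (y : ℝ) :
    (γF ≤ a * α2 * y / (a * α1 * y + 1 / ρ) ∧ γN ≤ a * α1 * ρ * y) ↔
      max (γF / ((α2 - α1 * γF) * a * ρ)) (γN / (a * α1 * ρ)) ≤ y := by
  rw [max_le_iff, ← div_le_iff₀' (by positivity : 0 < a * α1 * ρ)]
  refine and_congr_left fun hy => le_sinr_iff ha hρ hcond ?_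
  have : 0 < y := (div_pos hγN (by positivity)).trans_le hy
  positivity

theorem stmt_8_general (a α1 α2 ρ γF γN : ℝ) (ha : 0 < a) (hα1 : 0 < α1)
    (hρ : 0 < ρ) (hγN : 0 < γN) (hcond : 0 < α2 - α1 * γF) :
    (expMeasure1 {y : ℝ |
        ¬(γF ≤ a * α2 * y / (a * α1 * y + 1 / ρ) ∧ γN ≤ a * α1 * ρ * y)}).toReal
      = 1 - Real.exp (-(max (γF / ((α2 - α1 * γF) * a * ρ)) (γN / (a * α1 * ρ)))) := by
  set m := max (γF / ((α2 - α1 * γF) * a * ρ)) (γN / (a * α1 * ρ))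
  have hm : 0 ≤ m := (div_pos hγN (by positivity)).le.trans (le_max_right _ _)
  have houtage : {y : ℝ | ¬(γF ≤ a * α2 * y / (a * α1 * y + 1 / ρ) ∧ γN ≤ a * α1 * ρ * y)}
      = Set.Iio m :=
    Set.ext fun y => (decoding_success_iff ha hα1 hρ hγN hcond y).not.trans not_le
  rw [houtage, ← measureReal_def, expMeasure1_eq_expMeasure_one,
    measureReal_expMeasure_Iio one_pos hm, one_mul]

/-- Downlink NOMA outage probability of the near user: for Y ~ Exp(1),
P(¬(SINR_{N,F} ≥ γ̃_F ∧ SNR_N ≥ γ̃_N)) = 1 - e^(-ρ̃_m). -/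
theorem stmt_8 (a α1 α2 ρ γF γN : ℝ) (ha : 0 < a) (hα1 : 0 < α1) (hα2 : 0 < α2)
    (hρ : 0 < ρ) (hγF : 0 < γF) (hγN : 0 < γN) (hcond : 0 < α2 - α1 * γF) :
    (expMeasure1 {y : ℝ |
        ¬(γF ≤ a * α2 * y / (a * α1 * y + 1 / ρ) ∧ γN ≤ a * α1 * ρ * y)}).toReal
      = 1 - Real.exp (-(max (γF / ((α2 - α1 * γF) * a * ρ)) (γN / (a * α1 * ρ)))) :=
  stmt_8_general a α1 α2 ρ γF γN ha hα1 hρ hγN hcond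
end

section
/- Let Z have CDF F_Z(z) = (m̃^K (4 m_s m_l)^{-m_s K}/Γ(2 m_s K)) γ(2 m_s K, 2√(m_s m_l) z) near 0, and let c, α₁, α₂, γ̃ > 0 with α₂ - α₁ γ̃ > 0. Set c̃ = √(γ̃/(c(α₂ - α₁ γ̃))). Then as ρ → ∞, P( c α₂ Z² / (c α₁ Z² + 1/ρ) < γ̃ ) = F_Z(c̃ ρ^{-1/2}) and this quantity is asymptotically equivalent to (m̃^K c̃^{2 m_s K} / Γ(2 m_s K + 1)) · ρ^{-m_s K}, i.e., the ratio tends to 1. -/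
open MeasureTheory Real Filter

/-- Lower incomplete gamma function γ(a,x) = ∫₀ˣ t^(a-1) e^(-t) dt. -/
noncomputable def lowerGamma (a x : ℝ) : ℝ := ∫ t in Set.Ioc (0:ℝ) x, t ^ (a - 1) * Real.exp (-t)

/-!
For `ρ > 0` the outage event `c α₂ Z² / (c α₁ Z² + 1/ρ) < γ̃` is the interval `|Z| < c̃ ρ^(-1/2)`.
As `Z ≥ 0` almost surely and `F_Z` is continuous, its probability is `F_Z(c̃ ρ^(-1/2))`.
The asymptotics follow from `e^(-x) x^a / a ≤ γ(a, x) ≤ x^a / a`, once one notices that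
`(4 m_s m_l)^(-m_s K) (2 √(m_s m_l))^(2 m_s K) = 1` and `2 m_s K · Γ(2 m_s K) = Γ(2 m_s K + 1)`.
-/

open Set Topology

lemma integrableOn_rpow_sub_one_mul_exp_neg {a : ℝ} (ha : 0 < a) {s : Set ℝ} (hs : s ⊆ Ioi 0) :
    IntegrableOn (fun t : ℝ => t ^ (a - 1) * exp (-t)) s := by
  simpa only [mul_comm] using (GammaIntegral_convergent ha).mono_set hs

lemma integrableOn_Ioc_rpow_sub_one {a : ℝ} (ha : 0 < a) (x : ℝ) :
    IntegrableOn (fun t : ℝ => t ^ (a - 1)) (Ioc 0 x) :=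
  (intervalIntegral.intervalIntegrable_rpow' (by linarith : (-1:ℝ) < a - 1)).1

lemma integral_Ioc_rpow_sub_one {a x : ℝ} (ha : 0 < a) (hx : 0 ≤ x) :
    ∫ t in Ioc (0:ℝ) x, t ^ (a - 1) = x ^ a / a := by
  rw [← intervalIntegral.integral_of_le hx, integral_rpow (Or.inl (by linarith)),
    sub_add_cancel, zero_rpow ha.ne', sub_zero]

lemma lowerGamma_le_rpow_div {a x : ℝ} (ha : 0 < a) (hx : 0 ≤ x) :
    lowerGamma a x ≤ x ^ a / a := by
  rw [lowerGamma, ← integral_Ioc_rpow_sub_one ha hx]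
  refine setIntegral_mono_on (integrableOn_rpow_sub_one_mul_exp_neg ha Ioc_subset_Ioi_self)
    (integrableOn_Ioc_rpow_sub_one ha x) measurableSet_Ioc fun t ht => ?_
  exact mul_le_of_le_one_right (rpow_nonneg ht.1.le _) (exp_le_one_iff.mpr (by linarith [ht.1]))

lemma exp_neg_mul_rpow_div_le_lowerGamma {a x : ℝ} (ha : 0 < a) (hx : 0 ≤ x) :
    exp (-x) * (x ^ a / a) ≤ lowerGamma a x := by
  rw [lowerGamma, ← integral_Ioc_rpow_sub_one ha hx, ← integral_const_mul]
  refine setIntegral_mono_on ((integrableOn_Ioc_rpow_sub_one ha x).const_mul _)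
    (integrableOn_rpow_sub_one_mul_exp_neg ha Ioc_subset_Ioi_self) measurableSet_Ioc
    fun t ht => ?_
  rw [mul_comm]
  exact mul_le_mul_of_nonneg_left (exp_le_exp.mpr (neg_le_neg ht.2)) (rpow_nonneg ht.1.le _)

lemma tendsto_lowerGamma_div_rpow_div {a : ℝ} (ha : 0 < a) :
    Tendsto (fun x => lowerGamma a x / (x ^ a / a)) (𝓝[>] 0) (𝓝 1) := by
  have hexp : Tendsto (fun x : ℝ => exp (-x)) (𝓝[>] 0) (𝓝 1) := by
    have : ContinuousAt (fun x : ℝ => exp (-x)) 0 := by fun_prop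
    simpa using this.tendsto.mono_left nhdsWithin_le_nhds
  refine tendsto_of_tendsto_of_tendsto_of_le_of_le' hexp tendsto_const_nhds ?_ ?_ <;>
    filter_upwards [self_mem_nhdsWithin] with x (hx : 0 < x)
  · exact (le_div_iff₀ (by positivity)).mpr (exp_neg_mul_rpow_div_le_lowerGamma ha hx.le)
  · exact (div_le_one (by positivity)).mpr (lowerGamma_le_rpow_div ha hx.le)

lemma continuousAt_lowerGamma {a x : ℝ} (ha : 0 < a) (hx : 0 < x) :
    ContinuousAt (lowerGamma a) x := by
  have hint : IntervalIntegrable (fun t : ℝ => t ^ (a - 1) * exp (-t)) volume 0 (2 * x) :=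
    (intervalIntegrable_iff_integrableOn_Ioc_of_le (by linarith)).mpr
      (integrableOn_rpow_sub_one_mul_exp_neg ha Ioc_subset_Ioi_self)
  have hprim := intervalIntegral.continuousOn_primitive_interval' hint left_mem_uIcc
  rw [uIcc_of_le (by linarith)] at hprim
  refine (hprim.continuousAt (Icc_mem_nhds (by linarith) (by linarith))).congr ?_
  filter_upwards [Ici_mem_nhds hx] with y hy
  exact intervalIntegral.integral_of_le hy

lemma measureReal_Iio_eq_of_continuousWithinAt {μ : Measure ℝ} [IsFiniteMeasure μ]
    {F : ℝ → ℝ} {t : ℝ} (hF : ∀ᶠ s in 𝓝[≤] t, μ.real (Iic s) = F s)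
    (hcont : ContinuousWithinAt F (Iio t) t) :
    μ.real (Iio t) = F t := by
  refine le_antisymm ?_ (le_of_tendsto hcont ?_)
  · rw [← hF.self_of_nhdsWithin (mem_Iic.mpr le_rfl)]
    exact measureReal_mono Iio_subset_Iic_self
  · filter_upwards [nhdsWithin_mono t Iio_subset_Iic_self hF, self_mem_nhdsWithin] with s hs hst
    exact hs ▸ measureReal_mono (Iic_subset_Iio.mpr hst)

lemma measureReal_Ioo_neg_eq_measureReal_Iio {μ : Measure ℝ} (hμ : μ (Iio 0) = 0) {t : ℝ}
    (ht : 0 < t) : μ.real (Ioo (-t) t) = μ.real (Iio t) := by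
  have hdiff : Ioo (-t) t = Iio t \ Iic (-t) := by
    ext; simp [and_comm]
  have hnull : μ (Iic (-t)) = 0 := measure_mono_null (Iic_subset_Iio.mpr (by linarith)) hμ
  rw [hdiff, measureReal_def, measure_sdiff_null hnull, measureReal_def]

lemma setOf_div_lt_eq_Ioo {c α1 α2 γ ρ : ℝ} (hc : 0 < c) (hα1 : 0 ≤ α1)
    (hcond : 0 < α2 - α1 * γ) (hρ : 0 < ρ) :
    {z : ℝ | c * α2 * z ^ 2 / (c * α1 * z ^ 2 + 1 / ρ) < γ} =
      Ioo (-(√(γ / (c * (α2 - α1 * γ))) * ρ ^ (-(1:ℝ)/2)))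
        (√(γ / (c * (α2 - α1 * γ))) * ρ ^ (-(1:ℝ)/2)) := by
  have hP : 0 < c * (α2 - α1 * γ) := mul_pos hc hcond
  have hsqrt : √(γ / (c * (α2 - α1 * γ))) * ρ ^ (-(1:ℝ)/2) =
      √(γ / (c * (α2 - α1 * γ)) / ρ) := by
    rw [neg_div, rpow_neg hρ.le, ← sqrt_eq_rpow, sqrt_div' _ hρ.le, div_eq_mul_inv (√_)]
  ext z
  rw [mem_ofPred_eq, mem_Ioo, ← abs_lt, hsqrt, lt_sqrt (abs_nonneg z), sq_abs,
    div_lt_iff₀ (by positivity), lt_div_iff₀ hρ, lt_div_iff₀ hP, ← mul_lt_mul_iff_of_pos_right hρ]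
  constructor <;> intro h
  · field_simp at h
    nlinarith
  · field_simp
    nlinarith

lemma tendsto_const_mul_rpow_neg_half (u : ℝ) :
    Tendsto (fun ρ : ℝ => u * ρ ^ (-(1:ℝ)/2)) atTop (𝓝 0) := by
  rw [show (-(1:ℝ)/2) = -(1/2) by ring]
  simpa using (tendsto_rpow_neg_atTop (by norm_num : (0:ℝ) < 1/2)).const_mul u

lemma eventually_measureReal_setOf_div_lt_eq {μ : Measure ℝ} [IsFiniteMeasure μ]
    (hμ : μ (Iio 0) = 0) {F : ℝ → ℝ} (hF : ∀ z, 0 < z → ContinuousAt F z) {ε : ℝ}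
    (hε : 0 < ε) (hcdf : ∀ z ∈ Icc (0:ℝ) ε, μ.real (Iic z) = F z)
    {c α1 α2 γ : ℝ} (hc : 0 < c) (hα1 : 0 ≤ α1) (hγ : 0 < γ) (hcond : 0 < α2 - α1 * γ) :
    ∀ᶠ ρ in atTop, μ.real {z : ℝ | c * α2 * z ^ 2 / (c * α1 * z ^ 2 + 1 / ρ) < γ}
      = F (√(γ / (c * (α2 - α1 * γ))) * ρ ^ (-(1:ℝ)/2)) := by
  have hu : 0 < √(γ / (c * (α2 - α1 * γ))) := sqrt_pos.mpr (div_pos hγ (mul_pos hc hcond))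
  filter_upwards [eventually_gt_atTop 0,
    (tendsto_const_mul_rpow_neg_half _).eventually (ge_mem_nhds hε)] with ρ hρ htε
  have ht : 0 < √(γ / (c * (α2 - α1 * γ))) * ρ ^ (-(1:ℝ)/2) := mul_pos hu (rpow_pos_of_pos hρ _)
  rw [setOf_div_lt_eq_Ioo hc hα1 hcond hρ, measureReal_Ioo_neg_eq_measureReal_Iio hμ ht]
  refine measureReal_Iio_eq_of_continuousWithinAt ?_ (hF _ ht).continuousWithinAt
  filter_upwards [Icc_mem_nhdsLE ht] with s hs
  exact hcdf s ⟨hs.1, hs.2.trans htε⟩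

lemma rpow_div_Gamma_mul_rpow_neg_eq {ms ml k u ρ : ℝ} (hms : 0 < ms) (hml : 0 < ml)
    (hk : 0 < k) (hu : 0 ≤ u) (hρ : 0 < ρ) :
    u ^ (2 * ms * k) / Gamma (2 * ms * k + 1) * ρ ^ (-(ms * k)) =
      (4 * ms * ml) ^ (-(ms * k)) / Gamma (2 * ms * k)
        * ((2 * √(ms * ml) * (u * ρ ^ (-(1:ℝ)/2))) ^ (2 * ms * k) / (2 * ms * k)) := by
  have hb : (2 * √(ms * ml)) ^ (2 * ms * k) = (4 * ms * ml) ^ (ms * k) := by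
    rw [show 2 * ms * k = (2:ℕ) * (ms * k) by push_cast; ring, rpow_mul (by positivity),
      rpow_natCast, mul_pow, sq_sqrt (by positivity)]
    ring_nf
  have hρ' : (ρ ^ (-(1:ℝ)/2)) ^ (2 * ms * k) = ρ ^ (-(ms * k)) := by
    rw [← rpow_mul hρ.le]; ring_nf
  have hinv : (4 * ms * ml) ^ (-(ms * k)) * (4 * ms * ml) ^ (ms * k) = 1 := by
    rw [rpow_neg (by positivity), inv_mul_cancel₀ (by positivity)]
  rw [mul_rpow (x := 2 * √(ms * ml)) (by positivity) (by positivity),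
    mul_rpow hu (by positivity), hb, hρ', Gamma_add_one (by positivity)]
  linear_combination
    (-(u ^ (2 * ms * k) * ρ ^ (-(ms * k)) / (2 * ms * k * Gamma (2 * ms * k)))) * hinv

theorem stmt_10_general (μ : Measure ℝ) [IsProbabilityMeasure μ] (hnn : μ (Set.Iio 0) = 0)
    (ms ml mt : ℝ) (K : ℕ) (hms : 0 < ms) (hml : 0 < ml) (hmt : 0 < mt) (hK : 0 < K)
    (c α1 α2 γ : ℝ) (hc : 0 < c) (hα1 : 0 < α1) (hγ : 0 < γ)
    (hcond : 0 < α2 - α1 * γ)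
    (FZ : ℝ → ℝ)
    (hFZ : ∀ z, FZ z = mt ^ K * (4 * ms * ml) ^ (-(ms * (K:ℝ))) / Real.Gamma (2 * ms * (K:ℝ))
        * lowerGamma (2 * ms * (K:ℝ)) (2 * Real.sqrt (ms * ml) * z))
    (ε : ℝ) (hε : 0 < ε) (hcdf : ∀ z ∈ Set.Icc (0:ℝ) ε, (μ (Set.Iic z)).toReal = FZ z) :
    (∀ᶠ ρ in atTop, (μ {z : ℝ | c * α2 * z ^ 2 / (c * α1 * z ^ 2 + 1 / ρ) < γ}).toReal
        = FZ (Real.sqrt (γ / (c * (α2 - α1 * γ))) * ρ ^ (-(1:ℝ)/2))) ∧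
    Tendsto (fun ρ : ℝ =>
        (μ {z : ℝ | c * α2 * z ^ 2 / (c * α1 * z ^ 2 + 1 / ρ) < γ}).toReal
          / (mt ^ K * Real.sqrt (γ / (c * (α2 - α1 * γ))) ^ (2 * ms * (K:ℝ))
              / Real.Gamma (2 * ms * (K:ℝ) + 1) * ρ ^ (-(ms * (K:ℝ)))))
      atTop (nhds 1) := by
  set a := 2 * ms * (K:ℝ)
  set b := 2 * √(ms * ml)
  set u := √(γ / (c * (α2 - α1 * γ)))
  set C := mt ^ K * (4 * ms * ml) ^ (-(ms * (K:ℝ))) / Gamma a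
  have hK' : (0:ℝ) < K := Nat.cast_pos.mpr hK
  have ha : 0 < a := by positivity
  have hb : 0 < b := by positivity
  have hu : 0 < u := sqrt_pos.mpr (div_pos hγ (mul_pos hc hcond))
  have hC : 0 < C := div_pos (by positivity) (Gamma_pos_of_pos ha)
  have hFZ_cont (z : ℝ) (hz : 0 < z) : ContinuousAt FZ z := by
    rw [funext hFZ]
    exact continuousAt_const.mul
      ((continuousAt_lowerGamma ha (by positivity)).comp (continuousAt_id.const_mul b))
  have hprob := eventually_measureReal_setOf_div_lt_eq hnn hFZ_cont hε hcdf hc hα1.le hγ hcond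
  have hbu : Tendsto (fun ρ : ℝ => b * (u * ρ ^ (-(1:ℝ)/2))) atTop (𝓝[>] 0) :=
    tendsto_nhdsWithin_iff.mpr ⟨by simpa using (tendsto_const_mul_rpow_neg_half u).const_mul b,
      (eventually_gt_atTop 0).mono fun ρ hρ => mul_pos hb (mul_pos hu (rpow_pos_of_pos hρ _))⟩
  refine ⟨hprob, ((tendsto_lowerGamma_div_rpow_div ha).comp hbu).congr' ?_⟩
  filter_upwards [hprob, eventually_gt_atTop 0] with ρ hprobρ hρ
  have hden : mt ^ K * u ^ a / Gamma (a + 1) * ρ ^ (-(ms * (K:ℝ)))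
      = C * ((b * (u * ρ ^ (-(1:ℝ)/2))) ^ a / a) := by
    rw [mul_div_assoc, mul_assoc, rpow_div_Gamma_mul_rpow_neg_eq hms hml hK' hu.le hρ]
    ring
  rw [Function.comp_apply, ← measureReal_def, hprobρ, hFZ, hden, mul_div_mul_left _ _ hC.ne']

/-- High-SNR outage of the IRS-aided far user: for large ρ the outage probability equals
F_Z(c̃ ρ^(-1/2)) and is asymptotically m̃^K c̃^(2 m_s K)/Γ(2 m_s K + 1) ρ^(-m_s K), so the
diversity order is m_s K. -/
theorem stmt_10 (μ : Measure ℝ) [IsProbabilityMeasure μ] (hnn : μ (Set.Iio 0) = 0)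
    (ms ml mt : ℝ) (K : ℕ) (hms : 0 < ms) (hml : 0 < ml) (hmt : 0 < mt) (hK : 0 < K)
    (c α1 α2 γ : ℝ) (hc : 0 < c) (hα1 : 0 < α1) (hα2 : 0 < α2) (hγ : 0 < γ)
    (hcond : 0 < α2 - α1 * γ)
    (FZ : ℝ → ℝ)
    (hFZ : ∀ z, FZ z = mt ^ K * (4 * ms * ml) ^ (-(ms * (K:ℝ))) / Real.Gamma (2 * ms * (K:ℝ))
        * lowerGamma (2 * ms * (K:ℝ)) (2 * Real.sqrt (ms * ml) * z))
    (ε : ℝ) (hε : 0 < ε) (hcdf : ∀ z ∈ Set.Icc (0:ℝ) ε, (μ (Set.Iic z)).toReal = FZ z) :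
    (∀ᶠ ρ in atTop, (μ {z : ℝ | c * α2 * z ^ 2 / (c * α1 * z ^ 2 + 1 / ρ) < γ}).toReal
        = FZ (Real.sqrt (γ / (c * (α2 - α1 * γ))) * ρ ^ (-(1:ℝ)/2))) ∧
    Tendsto (fun ρ : ℝ =>
        (μ {z : ℝ | c * α2 * z ^ 2 / (c * α1 * z ^ 2 + 1 / ρ) < γ}).toReal
          / (mt ^ K * Real.sqrt (γ / (c * (α2 - α1 * γ))) ^ (2 * ms * (K:ℝ))
              / Real.Gamma (2 * ms * (K:ℝ) + 1) * ρ ^ (-(ms * (K:ℝ)))))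
      atTop (nhds 1) :=
  stmt_10_general μ hnn ms ml mt K hms hml hmt hK c α1 α2 γ hc hα1 hγ hcond FZ hFZ ε hε hcdf
end

section
/- Let X, Y be independent nonnegative random variables with Y ~ Exp(1) and X ~ χ'²₁(λ) having the series PDF f_X(x) = e^{-(x+λ)/2} Σ_{i=0}^∞ λ^i x^{i-1/2}/(i! 2^{2i+1/2} Γ(i+1/2)). For a, b, ρ', γ̃_N > 0, P( aY/(bX + 1/ρ') < γ̃_N ) = 1 - e^{-γ̃_N/(a ρ') - λ/2} Σ_{i=0}^∞ λ^i / ( i! 2^{2i+1/2} (b γ̃_N/a + 1/2)^{i+1/2} ). -/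
open MeasureTheory ProbabilityTheory Real

/-- Series PDF of the noncentral chi-square distribution χ'²₁(λ). -/
noncomputable def ncChiSqPDF (lam x : ℝ) : ℝ :=
  if 0 < x then Real.exp (-(x + lam) / 2) * ∑' i : ℕ,
      lam ^ i * x ^ ((i:ℝ) - 1/2)
        / ((i.factorial : ℝ) * 2 ^ (2 * (i:ℝ) + 1/2) * Real.Gamma ((i:ℝ) + 1/2))
  else 0

/-!
Conditioning on `X = x > 0`, the outage event fails exactly when `Y ≥ c x + d` with
`c = b γ̃_N / a` and `d = γ̃_N / (a ρ')`, which has probability `e^{-(c x + d)}`. Integrating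
against the series density of `X` term by term (monotone convergence, all terms are nonnegative),
each term is a Gamma integral `∫₀^∞ x^{i-1/2} e^{-(c+1/2) x} dx = Γ(i+1/2) (c+1/2)^{-(i+1/2)}`,
whose `Γ(i+1/2)` cancels the one in the density.
-/

open Set
open scoped Nat ENNReal

theorem Real.factorial_div_two_pow_le_Gamma_nat_add_half (n : ℕ) :
    (n ! : ℝ) / 2 ^ n ≤ Gamma (n + 1 / 2) := by
  induction n with
  | zero =>
    rw [Nat.factorial_zero, Nat.cast_one, pow_zero, div_one, Nat.cast_zero, zero_add,
      Gamma_one_half_eq]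
    exact one_le_sqrt.mpr (by linarith [pi_gt_three])
  | succ n ih =>
    rw [Nat.cast_succ, add_right_comm, Gamma_add_one (by positivity), Nat.factorial_succ,
      Nat.cast_mul, pow_succ, Nat.cast_succ]
    calc ((n : ℝ) + 1) * n ! / (2 ^ n * 2) = ((n + 1) / 2) * (n ! / 2 ^ n) := by ring
      _ ≤ (n + 1 / 2) * Gamma (n + 1 / 2) := by
        gcongr
        linarith [(Nat.cast_nonneg n : (0 : ℝ) ≤ n)]

noncomputable def ncChiSqTerm (lam x : ℝ) (i : ℕ) : ℝ :=
  lam ^ i * x ^ ((i : ℝ) - 1 / 2) / (i ! * 2 ^ (2 * (i : ℝ) + 1 / 2) * Gamma (i + 1 / 2))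

@[fun_prop]
theorem measurable_ncChiSqTerm (lam : ℝ) (i : ℕ) : Measurable fun x => ncChiSqTerm lam x i := by
  unfold ncChiSqTerm
  fun_prop

theorem ncChiSqPDF_eq (lam x : ℝ) :
    ncChiSqPDF lam x = if 0 < x then exp (-(x + lam) / 2) * ∑' i, ncChiSqTerm lam x i else 0 :=
  rfl

theorem ncChiSqTerm_nonneg {lam x : ℝ} (hlam : 0 ≤ lam) (hx : 0 ≤ x) (i : ℕ) :
    0 ≤ ncChiSqTerm lam x i := by
  unfold ncChiSqTerm
  positivity

theorem summable_ncChiSqTerm {lam x : ℝ} (hlam : 0 ≤ lam) (hx : 0 < x) :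
    Summable (ncChiSqTerm lam x) := by
  refine Summable.of_nonneg_of_le (ncChiSqTerm_nonneg hlam hx.le) (fun i => ?_)
    ((summable_pow_div_factorial (lam * x)).mul_left (x ^ (-(1 : ℝ) / 2)))
  have hGamma : (1 : ℝ) ≤ 2 ^ (2 * (i : ℝ) + 1 / 2) * Gamma (i + 1 / 2) :=
    calc (1 : ℝ) ≤ 2 ^ i * (i ! / 2 ^ i) := by
          rw [mul_div_cancel₀ _ (by positivity)]
          exact_mod_cast i.factorial_pos
      _ ≤ 2 ^ (2 * (i : ℝ) + 1 / 2) * Gamma (i + 1 / 2) := by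
          gcongr
          · rw [← rpow_natCast]
            exact rpow_le_rpow_of_exponent_le one_le_two
              (by linarith [(Nat.cast_nonneg i : (0 : ℝ) ≤ i)])
          · exact factorial_div_two_pow_le_Gamma_nat_add_half i
  have hxpow : x ^ ((i : ℝ) - 1 / 2) = x ^ (-(1 : ℝ) / 2) * x ^ i := by
    rw [← rpow_natCast, ← rpow_add hx]
    ring_nf
  calc ncChiSqTerm lam x i ≤ lam ^ i * x ^ ((i : ℝ) - 1 / 2) / (i ! * 1) := by
        unfold ncChiSqTerm
        rw [mul_assoc]
        gcongr
    _ = x ^ (-(1 : ℝ) / 2) * ((lam * x) ^ i / i !) := by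
        rw [hxpow, mul_pow, mul_one]
        ring

theorem ofReal_ncChiSqPDF {lam : ℝ} (hlam : 0 ≤ lam) :
    (fun x => ENNReal.ofReal (ncChiSqPDF lam x)) =
      (Ioi 0).indicator fun x =>
        ∑' i, ENNReal.ofReal (exp (-(x + lam) / 2) * ncChiSqTerm lam x i) := by
  ext x
  by_cases hx : 0 < x
  · rw [indicator_of_mem (mem_Ioi.mpr hx), ncChiSqPDF_eq, if_pos hx, ← tsum_mul_left,
      ENNReal.ofReal_tsum_of_nonneg
        (fun i => mul_nonneg (exp_pos _).le (ncChiSqTerm_nonneg hlam hx.le i))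
        ((summable_ncChiSqTerm hlam hx).mul_left _)]
  · rw [indicator_of_notMem (notMem_Ioi.mpr (not_lt.mp hx)), ncChiSqPDF_eq, if_neg hx,
      ENNReal.ofReal_zero]

theorem lintegral_rpow_mul_exp_neg_mul_Ioi {a r : ℝ} (ha : 0 < a) (hr : 0 < r) :
    ∫⁻ t in Ioi 0, ENNReal.ofReal (t ^ (a - 1) * exp (-(r * t))) =
      ENNReal.ofReal ((1 / r) ^ a * Gamma a) := by
  have hpos : 0 < (1 / r) ^ a * Gamma a := by positivity
  rw [← integral_rpow_mul_exp_neg_mul_Ioi ha hr] at hpos ⊢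
  exact (ofReal_integral_eq_lintegral_ofReal (Integrable.of_integral_ne_zero hpos.ne')
    (ae_restrict_of_forall_mem measurableSet_Ioi fun t (ht : 0 < t) => by positivity)).symm

theorem expMeasure1_Ici {t : ℝ} (ht : 0 ≤ t) :
    expMeasure1 (Ici t) = ENNReal.ofReal (exp (-t)) := by
  rw [expMeasure1, withDensity_apply _ measurableSet_Ici,
    Measure.restrict_congr_set Ioi_ae_eq_Ici.symm,
    setLIntegral_congr_fun measurableSet_Ioi fun y (hy : t < y) => by rw [if_pos (ht.trans hy.le)],
    ← ofReal_integral_eq_lintegral_ofReal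
      (by simpa using (exp_neg_integrableOn_Ioi t one_pos).integrable)
      (ae_of_all _ fun y => (exp_pos _).le),
    integral_exp_neg_Ioi]

theorem lintegral_ncChiSqTerm_mul_exp {lam c : ℝ} (hlam : 0 ≤ lam) (hc : 0 ≤ c) (d : ℝ)
    (i : ℕ) :
    ∫⁻ x in Ioi 0, ENNReal.ofReal (exp (-(x + lam) / 2) * ncChiSqTerm lam x i) *
        ENNReal.ofReal (exp (-(c * x + d))) =
      ENNReal.ofReal (exp (-d - lam / 2) *
        (lam ^ i / (i ! * 2 ^ (2 * (i : ℝ) + 1 / 2) * (c + 1 / 2) ^ ((i : ℝ) + 1 / 2)))) := by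
  set K := exp (-d - lam / 2) * (lam ^ i / (i ! * 2 ^ (2 * (i : ℝ) + 1 / 2) * Gamma (i + 1 / 2)))
  have hK : 0 ≤ K := by positivity
  have hintegrand : ∀ x ∈ Ioi (0 : ℝ),
      ENNReal.ofReal (exp (-(x + lam) / 2) * ncChiSqTerm lam x i) *
        ENNReal.ofReal (exp (-(c * x + d))) =
      ENNReal.ofReal K *
        ENNReal.ofReal (x ^ (((i : ℝ) + 1 / 2) - 1) * exp (-((c + 1 / 2) * x))) := by
    intro x (hx : 0 < x)
    rw [← ENNReal.ofReal_mul (mul_nonneg (exp_pos _).le (ncChiSqTerm_nonneg hlam hx.le i)),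
      ← ENNReal.ofReal_mul hK]
    congr 1
    have hexp : exp (-(x + lam) / 2) * exp (-(c * x + d)) =
        exp (-d - lam / 2) * exp (-((c + 1 / 2) * x)) := by
      rw [← exp_add, ← exp_add]
      ring_nf
    simp only [K, ncChiSqTerm, show ((i : ℝ) + 1 / 2) - 1 = (i : ℝ) - 1 / 2 by ring]
    rw [mul_right_comm, hexp]
    ring
  rw [setLIntegral_congr_fun measurableSet_Ioi hintegrand,
    lintegral_const_mul' _ _ ENNReal.ofReal_ne_top,
    lintegral_rpow_mul_exp_neg_mul_Ioi (by positivity) (by positivity), ← ENNReal.ofReal_mul hK]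
  congr 1
  have hGamma : Gamma ((i : ℝ) + 1 / 2) ≠ 0 := (Gamma_pos_of_pos (by positivity)).ne'
  simp only [K, div_rpow zero_le_one (by positivity : (0 : ℝ) ≤ c + 1 / 2), one_rpow]
  field_simp

theorem ProbabilityTheory.IndepFun.measure_preimage_prodMk {Ω α β : Type*} [MeasurableSpace Ω]
    [MeasurableSpace α] [MeasurableSpace β] {μ : Measure Ω} [IsFiniteMeasure μ]
    {X : Ω → α} {Y : Ω → β} (hXY : IndepFun X Y μ) (hX : Measurable X) (hY : Measurable Y)
    {S : Set (α × β)} (hS : MeasurableSet S) :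
    μ ((fun ω => (X ω, Y ω)) ⁻¹' S) = ∫⁻ x, μ.map Y (Prod.mk x ⁻¹' S) ∂μ.map X := by
  rw [← Measure.map_apply (hX.prodMk hY) hS,
    (indepFun_iff_map_prod_eq_prod_map_map hX.aemeasurable hY.aemeasurable).mp hXY,
    Measure.prod_apply hS]

theorem setOf_not_mul_div_lt {a D γ : ℝ} (ha : 0 < a) (hD : 0 < D) :
    {y : ℝ | ¬ a * y / D < γ} = Ici (γ * D / a) := by
  ext y
  show ¬ a * y / D < γ ↔ γ * D / a ≤ y
  rw [not_lt, le_div_iff₀ hD, div_le_iff₀ ha, mul_comm y]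

theorem lintegral_withDensity_ncChiSqPDF_eq_tsum {lam c d : ℝ} (hlam : 0 ≤ lam) (hc : 0 ≤ c)
    (hd : 0 ≤ d) {g : ℝ → ℝ≥0∞} (hg : ∀ x, 0 < x → g x = expMeasure1 (Ici (c * x + d))) :
    ∫⁻ x, g x ∂(volume.withDensity fun x => ENNReal.ofReal (ncChiSqPDF lam x)) =
      ∑' i : ℕ, ENNReal.ofReal (exp (-d - lam / 2) *
        (lam ^ i / (i ! * 2 ^ (2 * (i : ℝ) + 1 / 2) * (c + 1 / 2) ^ ((i : ℝ) + 1 / 2)))) := by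
  rw [ofReal_ncChiSqPDF hlam, withDensity_indicator measurableSet_Ioi]
  have hg_ae : g =ᵐ[(volume.restrict (Ioi 0)).withDensity fun x =>
      ∑' i, ENNReal.ofReal (exp (-(x + lam) / 2) * ncChiSqTerm lam x i)]
      fun x => ENNReal.ofReal (exp (-(c * x + d))) :=
    withDensity_absolutelyContinuous _ _ <| ae_restrict_of_forall_mem measurableSet_Ioi
      fun x (hx : 0 < x) => by rw [hg x hx, expMeasure1_Ici (by positivity)]
  rw [lintegral_congr_ae hg_ae,
    lintegral_withDensity_eq_lintegral_mul _ (by fun_prop) (by fun_prop)]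
  simp only [Pi.mul_apply, ← ENNReal.tsum_mul_right]
  rw [lintegral_tsum fun i => by fun_prop]
  exact tsum_congr fun i => lintegral_ncChiSqTerm_mul_exp hlam hc d i

/-- Uplink NOMA outage probability of the near user: with Y ~ Exp(1) and X ~ χ'²₁(λ)
independent, P(aY/(bX + 1/ρ') < γ̃_N) = 1 - e^(-γ̃_N/(aρ') - λ/2) Σᵢ λ^i /
(i! 2^(2i+1/2) (bγ̃_N/a + 1/2)^(i+1/2)). -/
theorem stmt_15 {Ω : Type*} [MeasurableSpace Ω] (μ : Measure Ω) [IsProbabilityMeasure μ]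
    (X Y : Ω → ℝ) (hX : Measurable X) (hY : Measurable Y) (hindep : IndepFun X Y μ)
    (lam a b ρ' γN : ℝ) (hlam : 0 < lam) (ha : 0 < a) (hb : 0 < b) (hρ : 0 < ρ') (hγ : 0 < γN)
    (hlawY : μ.map Y = expMeasure1)
    (hlawX : μ.map X = MeasureTheory.volume.withDensity fun x => ENNReal.ofReal (ncChiSqPDF lam x)) :
    (μ {ω | a * Y ω / (b * X ω + 1 / ρ') < γN}).toReal
      = 1 - Real.exp (-(γN / (a * ρ')) - lam / 2) * ∑' i : ℕ,
          lam ^ i / ((i.factorial : ℝ) * 2 ^ (2 * (i:ℝ) + 1/2)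
            * (b * γN / a + 1/2) ^ ((i:ℝ) + 1/2)) := by
  set S : Set (ℝ × ℝ) := {p | ¬ a * p.2 / (b * p.1 + 1 / ρ') < γN}
  have hS : MeasurableSet S :=
    (measurableSet_lt (f := fun p : ℝ × ℝ => a * p.2 / (b * p.1 + 1 / ρ')) (by fun_prop)
      measurable_const).compl
  have hslice (x : ℝ) (hx : 0 < x) :
      Prod.mk x ⁻¹' S = Ici (b * γN / a * x + γN / (a * ρ')) := by
    rw [← show γN * (b * x + 1 / ρ') / a = b * γN / a * x + γN / (a * ρ') by field_simp]
    exact setOf_not_mul_div_lt (D := b * x + 1 / ρ') ha (by positivity)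
  set E := {ω | a * Y ω / (b * X ω + 1 / ρ') < γN}
  have hEc : Eᶜ = (fun ω => (X ω, Y ω)) ⁻¹' S := rfl
  have htail : μ Eᶜ = ∑' i : ℕ, ENNReal.ofReal
      (exp (-(γN / (a * ρ')) - lam / 2) * (lam ^ i / (i ! * 2 ^ (2 * (i : ℝ) + 1 / 2)
        * (b * γN / a + 1 / 2) ^ ((i : ℝ) + 1 / 2)))) := by
    rw [hEc, hindep.measure_preimage_prodMk hX hY hS, hlawX, hlawY]
    exact lintegral_withDensity_ncChiSqPDF_eq_tsum hlam.le (by positivity) (by positivity)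
      fun x hx => by rw [hslice x hx]
  -- `ENNReal.tsum_toReal_eq` needs no summability: the series is finite, being a probability.
  rw [← compl_compl E, prob_compl_eq_one_sub (hEc ▸ hS.preimage (hX.prodMk hY)), htail,
    ENNReal.toReal_sub_of_le (htail ▸ prob_le_one) ENNReal.one_ne_top, ENNReal.toReal_one,
    ENNReal.tsum_toReal_eq fun _ => ENNReal.ofReal_ne_top, ← tsum_mul_left]
  congr 2 with i
  exact ENNReal.toReal_ofReal (by positivity)
end

section
/- Fix λ > 0, a, b, γ̃_N, γ̃_F > 0. Define P_F(ρ') = 1 - e^{-γ̃_N/(a ρ') - λ/2} Σ_{i=0}^∞ λ^i Γ(i+1/2, γ̃_N γ̃_F/(a ρ') + γ̃_F/(2 b ρ')) / ( i! 2^{2i+1/2} (b γ̃_N/a + 1/2)^{i+1/2} Γ(i+1/2) ). Then lim_{ρ' → ∞} P_F(ρ') = 1 - e^{-λ/2} Σ_{i=0}^∞ λ^i / ( i! 2^{2i+1/2} (b γ̃_N/a + 1/2)^{i+1/2} ), which is strictly positive; hence the uplink NOMA outage probability converges to a nonzero floor and the diversity order is 0. -/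
/-!
With `c = b γ̃_N / a + 1/2 > 1/2`, the `i`-th term of the series is `w i * Γ(i+1/2, x)/Γ(i+1/2)`
with `w i = (λ/(4c))^i / (i! √(2c))`. Since `0 ≤ Γ(s, x) ≤ Γ(s)`, the terms are dominated by the
summable `w`, and `Γ(s, x) → Γ(s)` as `x → 0⁺`, so Tannery's theorem gives the limit
`1 - e^{-λ/2} ∑ w i = 1 - e^{λ/(4c) - λ/2} / √(2c)`, which is positive because `λ/(4c) < λ/2`
and `√(2c) > 1`.
-/

open MeasureTheory Real Filter

/-- Upper incomplete gamma function Γ(s,x) = ∫ₓ^∞ u^(s-1) e^(-u) du. -/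
noncomputable def upperGamma (s x : ℝ) : ℝ := ∫ u in Set.Ioi x, u ^ (s - 1) * Real.exp (-u)

open Set Topology Nat

lemma integrableOn_Ioi_rpow_mul_exp_neg {s : ℝ} (hs : 0 < s) :
    IntegrableOn (fun u : ℝ => u ^ (s - 1) * exp (-u)) (Ioi 0) :=
  (GammaIntegral_convergent hs).congr_fun (fun _ _ => mul_comm _ _) measurableSet_Ioi

lemma upperGamma_zero {s : ℝ} (hs : 0 < s) : upperGamma s 0 = Gamma s := by
  rw [upperGamma, Gamma_eq_integral hs]
  exact setIntegral_congr_fun measurableSet_Ioi fun _ _ => mul_comm _ _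

lemma upperGamma_nonneg (s : ℝ) {x : ℝ} (hx : 0 ≤ x) : 0 ≤ upperGamma s x :=
  setIntegral_nonneg measurableSet_Ioi fun _ hu =>
    mul_nonneg (rpow_nonneg (hx.trans hu.le) _) (exp_pos _).le

lemma upperGamma_le_Gamma {s x : ℝ} (hs : 0 < s) (hx : 0 ≤ x) : upperGamma s x ≤ Gamma s := by
  rw [← upperGamma_zero hs]
  refine setIntegral_mono_set (integrableOn_Ioi_rpow_mul_exp_neg hs) ?_
    (Ioi_subset_Ioi hx).eventuallyLE
  exact (ae_restrict_iff' measurableSet_Ioi).2 <| ae_of_all _ fun u hu =>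
    mul_nonneg (rpow_nonneg (le_of_lt hu) _) (exp_pos _).le

lemma tendsto_upperGamma_nhdsGT_zero {s : ℝ} (hs : 0 < s) :
    Tendsto (upperGamma s) (𝓝[>] 0) (𝓝 (Gamma s)) := by
  have hcont :=
    (integrableOn_Ioi_rpow_mul_exp_neg hs).continuousOn_Ici_primitive_Ioi 0 self_mem_Ici
  rw [← upperGamma_zero hs]
  exact (hcont.mono Ioi_subset_Ici_self).tendsto

lemma two_rpow_mul_rpow_eq {c : ℝ} (hc : 0 < c) (i : ℕ) :
    (2 : ℝ) ^ (2 * (i : ℝ) + 1 / 2) * c ^ ((i : ℝ) + 1 / 2) = (4 * c) ^ i * √(2 * c) := by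
  rw [rpow_add two_pos, rpow_add hc, show (2 : ℝ) * i = ((2 * i : ℕ) : ℝ) by push_cast; ring,
    rpow_natCast, rpow_natCast, pow_mul, sqrt_eq_rpow, mul_rpow zero_le_two hc.le, mul_pow]
  ring

lemma hasSum_pow_div_factorial_mul_two_rpow_mul_rpow (lam : ℝ) {c : ℝ} (hc : 0 < c) :
    HasSum (fun i : ℕ => lam ^ i / (i ! * 2 ^ (2 * (i : ℝ) + 1 / 2) * c ^ ((i : ℝ) + 1 / 2)))
      (exp (lam / (4 * c)) / √(2 * c)) := by
  have hterm (i : ℕ) : lam ^ i / (i ! * 2 ^ (2 * (i : ℝ) + 1 / 2) * c ^ ((i : ℝ) + 1 / 2)) =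
      (lam / (4 * c)) ^ i / i ! / √(2 * c) := by
    rw [mul_assoc, two_rpow_mul_rpow_eq hc, div_pow]
    field_simp
  simp_rw [hterm, exp_eq_exp_ℝ]
  exact (NormedSpace.expSeries_div_hasSum_exp (lam / (4 * c))).div_const _

lemma exp_neg_half_mul_exp_div_sqrt_lt_one {lam c : ℝ} (hlam : 0 ≤ lam) (hc : 1 / 2 < c) :
    exp (-lam / 2) * (exp (lam / (4 * c)) / √(2 * c)) < 1 := by
  have hexp : exp (-lam / 2) * exp (lam / (4 * c)) ≤ 1 := by
    rw [← exp_add, exp_le_one_iff]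
    have : lam / (4 * c) ≤ lam / 2 := by gcongr; linarith
    linarith
  have hsqrt : 1 < √(2 * c) := by
    rw [lt_sqrt zero_le_one]; linarith
  rw [← mul_div_assoc, div_lt_one (by positivity)]
  linarith

lemma tendsto_tsum_mul_upperGamma_div_Gamma {α : Type*} {l : Filter α} {w s : ℕ → ℝ}
    {x : α → ℝ} (hw : Summable w) (hw0 : ∀ i, 0 ≤ w i) (hs : ∀ i, 0 < s i)
    (hx : Tendsto x l (𝓝[>] 0)) :
    Tendsto (fun ρ => ∑' i, w i * (upperGamma (s i) (x ρ) / Gamma (s i))) l (𝓝 (∑' i, w i)) := by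
  refine tendsto_tsum_of_dominated_convergence hw (fun i => ?_) ?_
  · simpa [div_self (Gamma_pos_of_pos (hs i)).ne'] using
      (((tendsto_upperGamma_nhdsGT_zero (hs i)).comp hx).div_const (Gamma (s i))).const_mul (w i)
  · filter_upwards [hx self_mem_nhdsWithin] with ρ (hρ : 0 < x ρ) i
    have hΓ := Gamma_pos_of_pos (hs i)
    have hratio : upperGamma (s i) (x ρ) / Gamma (s i) ≤ 1 :=
      (div_le_one hΓ).2 (upperGamma_le_Gamma (hs i) hρ.le)
    rw [norm_of_nonneg (mul_nonneg (hw0 i) (div_nonneg (upperGamma_nonneg _ hρ.le) hΓ.le))]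
    exact mul_le_of_le_one_right (hw0 i) hratio

/-- The uplink NOMA outage probability P_F(ρ') converges, as ρ' → ∞, to the strictly
positive floor 1 - e^(-λ/2) Σᵢ λ^i/(i! 2^(2i+1/2)(bγ̃_N/a + 1/2)^(i+1/2)); hence the
diversity order is 0. -/
theorem stmt_17 (lam a b γN γF : ℝ) (hlam : 0 < lam) (ha : 0 < a) (hb : 0 < b)
    (hγN : 0 < γN) (hγF : 0 < γF) :
    Tendsto (fun ρ' : ℝ => 1 - Real.exp (-(γN / (a * ρ')) - lam / 2) * ∑' i : ℕ,
        lam ^ i * upperGamma ((i:ℝ) + 1/2) (γN * γF / (a * ρ') + γF / (2 * b * ρ'))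
          / ((i.factorial : ℝ) * 2 ^ (2 * (i:ℝ) + 1/2) * (b * γN / a + 1/2) ^ ((i:ℝ) + 1/2)
              * Real.Gamma ((i:ℝ) + 1/2)))
      atTop
      (nhds (1 - Real.exp (-lam / 2) * ∑' i : ℕ,
        lam ^ i / ((i.factorial : ℝ) * 2 ^ (2 * (i:ℝ) + 1/2)
          * (b * γN / a + 1/2) ^ ((i:ℝ) + 1/2)))) ∧
    0 < 1 - Real.exp (-lam / 2) * ∑' i : ℕ,
        lam ^ i / ((i.factorial : ℝ) * 2 ^ (2 * (i:ℝ) + 1/2)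
          * (b * γN / a + 1/2) ^ ((i:ℝ) + 1/2)) := by
  set c : ℝ := b * γN / a + 1 / 2
  have hc : 1 / 2 < c := lt_add_of_pos_left _ (by positivity)
  have hsum := hasSum_pow_div_factorial_mul_two_rpow_mul_rpow lam (by linarith : 0 < c)
  refine ⟨?_, hsum.tsum_eq ▸ sub_pos.2 (exp_neg_half_mul_exp_div_sqrt_lt_one hlam.le hc)⟩
  have hx : Tendsto (fun ρ' : ℝ => γN * γF / (a * ρ') + γF / (2 * b * ρ')) atTop (𝓝[>] 0) := by
    refine tendsto_nhdsWithin_iff.2 ⟨?_, ?_⟩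
    · simpa using (tendsto_const_nhds.div_atTop (tendsto_id.const_mul_atTop ha)).add
        (tendsto_const_nhds.div_atTop (tendsto_id.const_mul_atTop (by positivity : 0 < 2 * b)))
    · filter_upwards [eventually_gt_atTop 0] with ρ' hρ'
      exact (by positivity : 0 < γN * γF / (a * ρ') + γF / (2 * b * ρ'))
  have hexp : Tendsto (fun ρ' : ℝ => exp (-(γN / (a * ρ')) - lam / 2)) atTop
      (𝓝 (exp (-lam / 2))) := by
    simpa [neg_div] using
      ((tendsto_const_nhds.div_atTop (tendsto_id.const_mul_atTop ha)).neg.sub_const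
        (lam / 2)).rexp
  have hseries := tendsto_tsum_mul_upperGamma_div_Gamma (s := fun i : ℕ => (i : ℝ) + 1 / 2)
    hsum.summable (fun _ => by positivity) (fun _ => by positivity) hx
  refine ((hexp.mul hseries).const_sub 1).congr fun ρ' => ?_
  simp only [mul_div_mul_comm]
end
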